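/- arXiv:2602.13995 — 5 statements merged into one kernel-verified Lean document; each statement's English description precedes it below -/
import Mathlib

section
/- For every integer k ≥ 3 and every real number θ, define g(θ) = (k/(2(k+2)²))·sin((k+2)θ) − ((k−2)/(2k²))·sin(kθ), so that g′(θ) = (k/(2(k+2)))·cos((k+2)θ) − ((k−2)/(2k))·cos(kθ). Then 2·g(θ)·cos(2θ) − sin(2θ)·g′(θ) = −d⁺_{k+2}·e_{k+2}(θ) + (d⁺_k − d⁺_{k+2})·e_k(θ) + d⁺_k·e_{k−2}(θ). -/
/-!
By product-to-sum, the bracket of `sin (a θ)` with `sin (2θ)` is a combination of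
`sin ((a + 2) θ)` and `sin ((a - 2) θ)`. Applied to the two modes `k + 2` and `k` of `g`, the
left side becomes a combination of `sin` at the frequencies `k + 4, k + 2, k, k - 2`, and so is
the right side once each `e_j` is unfolded; the identity reduces to matching four coefficients,
which are rational functions of `k`.
-/

open Real

/-- The weighted basis function `e_j(θ) = sin((j+2)θ)/(j+2) − sin(jθ)/j`. -/
noncomputable def eBasis (j : ℕ) (θ : ℝ) : ℝ :=
  sin (((j : ℝ) + 2) * θ) / ((j : ℝ) + 2) - sin ((j : ℝ) * θ) / (j : ℝ)

/-- The tridiagonal coefficient `d⁺_j = (j−2)²·(j+2)/(4j²)`. -/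
noncomputable def dPlus (j : ℕ) : ℝ :=
  ((j : ℝ) - 2) ^ 2 * ((j : ℝ) + 2) / (4 * (j : ℝ) ^ 2)

theorem bracket_sin_mul_sin_two_mul (a θ : ℝ) :
    2 * sin (a * θ) * cos (2 * θ) - sin (2 * θ) * (a * cos (a * θ)) =
      (1 - a / 2) * sin ((a + 2) * θ) + (1 + a / 2) * sin ((a - 2) * θ) := by
  have h₁ := two_mul_sin_mul_cos (a * θ) (2 * θ)
  have h₂ := two_mul_sin_mul_cos (2 * θ) (a * θ)
  rw [show a * θ - 2 * θ = (a - 2) * θ by ring, show a * θ + 2 * θ = (a + 2) * θ by ring] at h₁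
  rw [show 2 * θ - a * θ = -((a - 2) * θ) by ring, sin_neg,
    show 2 * θ + a * θ = (a + 2) * θ by ring] at h₂
  linear_combination h₁ - a / 2 * h₂

theorem eBasis_add_two (j : ℕ) (θ : ℝ) :
    eBasis (j + 2) θ =
      sin (((j : ℝ) + 4) * θ) / ((j : ℝ) + 4) - sin (((j : ℝ) + 2) * θ) / ((j : ℝ) + 2) := by
  rw [eBasis]
  push_cast
  ring_nf

theorem eBasis_sub_two {j : ℕ} (hj : 2 ≤ j) (θ : ℝ) :
    eBasis (j - 2) θ = sin ((j : ℝ) * θ) / j - sin (((j : ℝ) - 2) * θ) / ((j : ℝ) - 2) := by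
  rw [eBasis, Nat.cast_sub hj, Nat.cast_ofNat, sub_add_cancel]

/-- Tridiagonal action of the linearized operator `L⁺` on the basis function `e_k`:
with `g = e_k/2 + v_k`, one has
`{g, sin 2θ} = −d⁺_{k+2}·e_{k+2} + (d⁺_k − d⁺_{k+2})·e_k + d⁺_k·e_{k−2}`. -/
theorem lplus_eBasis (k : ℕ) (hk : 3 ≤ k) (θ : ℝ) :
    2 * ((k : ℝ) / (2 * ((k : ℝ) + 2) ^ 2) * sin (((k : ℝ) + 2) * θ) -
          ((k : ℝ) - 2) / (2 * (k : ℝ) ^ 2) * sin ((k : ℝ) * θ)) * cos (2 * θ) -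
      sin (2 * θ) * ((k : ℝ) / (2 * ((k : ℝ) + 2)) * cos (((k : ℝ) + 2) * θ) -
          ((k : ℝ) - 2) / (2 * (k : ℝ)) * cos ((k : ℝ) * θ)) =
    -(dPlus (k + 2)) * eBasis (k + 2) θ + (dPlus k - dPlus (k + 2)) * eBasis k θ +
      dPlus k * eBasis (k - 2) θ := by
  have hk3 : (3 : ℝ) ≤ k := by exact_mod_cast hk
  have hk0 : (k : ℝ) ≠ 0 := by linarith
  have hk2 : (k : ℝ) - 2 ≠ 0 := by linarith
  have hk2' : (k : ℝ) + 2 ≠ 0 := by linarith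
  have hk4 : (k : ℝ) + 4 ≠ 0 := by linarith
  have hhigh := bracket_sin_mul_sin_two_mul ((k : ℝ) + 2) θ
  have hlow := bracket_sin_mul_sin_two_mul (k : ℝ) θ
  rw [show (k : ℝ) + 2 + 2 = k + 4 by ring, show (k : ℝ) + 2 - 2 = k by ring] at hhigh
  rw [eBasis_add_two, eBasis_sub_two (by omega), eBasis, dPlus, dPlus]
  push_cast
  linear_combination (norm := skip)
    (k : ℝ) / (2 * ((k : ℝ) + 2) ^ 2) * hhigh - ((k : ℝ) - 2) / (2 * (k : ℝ) ^ 2) * hlow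
  field_simp
  ring
end

section
/- Let x₀ < x₁ be real numbers and let p₁, p₂, q : [x₀, x₁] → ℝ be continuous. Let y, φ : [x₀, x₁] → ℝ be twice continuously differentiable with y″(x) = p₁(x)·y′(x) + p₂(x)·y(x) + q(x) for all x ∈ [x₀, x₁], φ″(x) > p₁(x)·φ′(x) + p₂(x)·φ(x) + q(x) for all x ∈ [x₀, x₁], φ(x₀) = y(x₀), and φ′(x₀) = y′(x₀). Suppose moreover that there is a twice continuously differentiable u : [x₀, x₁] → ℝ with u″(x) = p₁(x)·u′(x) + p₂(x)·u(x) on [x₀, x₁], u(x₀) = 0, u′(x₀) = 1, and u(x) > 0 for all x with x₀ < x ≤ x₁. Then φ(x) > y(x) for all x with x₀ < x ≤ x₁. -/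
open Set Filter Topology

/-!
Put `w = φ - y`, so that `w'' - p₁ w' - p₂ w > 0` and `w(x₀) = w'(x₀) = 0`. The Wronskian
`W = u w' - u' w` satisfies `(W e^{-P})' = u (w'' - p₁ w' - p₂ w) e^{-P} > 0` for a primitive `P`
of `p₁`, and vanishes at `x₀`, so `W > 0` on `(x₀, x₁]`. Since `(w / u)' = W / u²`, the quotient
`w / u` is strictly increasing on `(x₀, x₁]`; it tends to `w'(x₀) / u'(x₀) = 0` at `x₀`, so it is
positive there, and so is `w`.
-/

theorem ContinuousOn.exists_hasDerivWithinAt_Icc {f : ℝ → ℝ} {a b : ℝ}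
    (hf : ContinuousOn f (Icc a b)) :
    ∃ F : ℝ → ℝ, ∀ t ∈ Icc a b, HasDerivWithinAt F (f t) (Icc a b) t := by
  rcases le_or_gt a b with hab | hba
  · have hext : Continuous (IccExtend hab ((Icc a b).domRestrict f)) :=
      (continuousOn_iff_continuous_domRestrict.mp hf).Icc_extend'
    refine ⟨fun s => ∫ r in a..s, IccExtend hab ((Icc a b).domRestrict f) r, fun t ht => ?_⟩
    have hF := (hext.integral_hasStrictDerivAt a t).hasDerivAt.hasDerivWithinAt (s := Icc a b)
    rwa [IccExtend_of_mem _ _ ht] at hF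
  · exact ⟨0, fun t ht => absurd (ht.1.trans ht.2) hba.not_ge⟩

theorem tendsto_div_of_hasDerivWithinAt {f g : ℝ → ℝ} {f' g' a : ℝ} {s : Set ℝ}
    (hf : HasDerivWithinAt f f' s a) (hg : HasDerivWithinAt g g' s a)
    (hf0 : f a = 0) (hg0 : g a = 0) (hg' : g' ≠ 0) :
    Tendsto (fun t => f t / g t) (𝓝[s \ {a}] a) (𝓝 (f' / g')) := by
  refine ((hasDerivWithinAt_iff_tendsto_slope.mp hf).div
    (hasDerivWithinAt_iff_tendsto_slope.mp hg) hg').congr'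
    (eventually_nhdsWithin_of_forall fun t ht => ?_)
  have hta : t - a ≠ 0 := sub_ne_zero.mpr ht.2
  simp only [Pi.div_apply, slope_def_field, hf0, hg0, sub_zero]
  field_simp

theorem StrictMonoOn.pos_of_tendsto_zero {g : ℝ → ℝ} {a b : ℝ} (hg : StrictMonoOn g (Ioc a b))
    (hlim : Tendsto g (𝓝[>] a) (𝓝 0)) : ∀ t ∈ Ioc a b, 0 < g t := by
  intro t ht
  obtain ⟨m, ham, hmt⟩ := exists_between ht.1
  have hm : m ∈ Ioc a b := ⟨ham, hmt.le.trans ht.2⟩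
  have hgm : 0 ≤ g m := le_of_tendsto hlim <| eventually_of_mem (Ioo_mem_nhdsGT ham) fun s hs =>
    (hg ⟨hs.1, hs.2.le.trans hm.2⟩ hm hs.2).le
  exact hgm.trans_lt (hg hm ht hmt)

section Wronskian

variable {a b : ℝ} {p₁ p₂ u u' u'' w w' w'' : ℝ → ℝ}

theorem hasDerivWithinAt_wronskian_mul_exp {P : ℝ → ℝ} {s : Set ℝ} {t : ℝ}
    (hP : HasDerivWithinAt P (p₁ t) s t)
    (hu : HasDerivWithinAt u (u' t) s t) (hu' : HasDerivWithinAt u' (u'' t) s t)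
    (hw : HasDerivWithinAt w (w' t) s t) (hw' : HasDerivWithinAt w' (w'' t) s t)
    (huODE : u'' t = p₁ t * u' t + p₂ t * u t) :
    HasDerivWithinAt (fun r => (u r * w' r - u' r * w r) * Real.exp (-P r))
      (u t * (w'' t - p₁ t * w' t - p₂ t * w t) * Real.exp (-P t)) s t := by
  refine (((hu.mul hw').sub (hu'.mul hw)).mul hP.neg.exp).congr_deriv ?_
  simp only [Pi.neg_apply, Pi.mul_apply, Pi.sub_apply, huODE]
  ring

theorem wronskian_pos_of_strict_supersolution (hp₁ : ContinuousOn p₁ (Icc a b))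
    (hu : ∀ t ∈ Icc a b, HasDerivWithinAt u (u' t) (Icc a b) t)
    (hu' : ∀ t ∈ Icc a b, HasDerivWithinAt u' (u'' t) (Icc a b) t)
    (hw : ∀ t ∈ Icc a b, HasDerivWithinAt w (w' t) (Icc a b) t)
    (hw' : ∀ t ∈ Icc a b, HasDerivWithinAt w' (w'' t) (Icc a b) t)
    (huODE : ∀ t ∈ Icc a b, u'' t = p₁ t * u' t + p₂ t * u t)
    (hwODE : ∀ t ∈ Ioo a b, p₁ t * w' t + p₂ t * w t < w'' t)
    (hu0 : u a = 0) (hw0 : w a = 0) (hupos : ∀ t ∈ Ioo a b, 0 < u t) :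
    ∀ t ∈ Ioc a b, 0 < u t * w' t - u' t * w t := by
  obtain ⟨P, hP⟩ := hp₁.exists_hasDerivWithinAt_Icc
  have hV := fun t (ht : t ∈ Icc a b) => hasDerivWithinAt_wronskian_mul_exp
    (hP t ht) (hu t ht) (hu' t ht) (hw t ht) (hw' t ht) (huODE t ht)
  have hVmono : StrictMonoOn (fun r => (u r * w' r - u' r * w r) * Real.exp (-P r)) (Icc a b) :=
    strictMonoOn_of_hasDerivWithinAt_pos (convex_Icc a b)
      (fun t ht => (hV t ht).continuousWithinAt)
      (by
        rw [interior_Icc]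
        exact fun t ht => (hV t (Ioo_subset_Icc_self ht)).mono Ioo_subset_Icc_self)
      (by
        rw [interior_Icc]
        exact fun t ht => mul_pos (mul_pos (hupos t ht) (by linarith [hwODE t ht]))
          (Real.exp_pos _))
  intro t ht
  have hVt := hVmono (left_mem_Icc.mpr (ht.1.le.trans ht.2)) (Ioc_subset_Icc_self ht) ht.1
  simp only [hu0, hw0, zero_mul, mul_zero, sub_zero] at hVt
  exact (mul_pos_iff_of_pos_right (Real.exp_pos _)).mp hVt

theorem strictMonoOn_div_of_wronskian_pos
    (hu : ∀ t ∈ Icc a b, HasDerivWithinAt u (u' t) (Icc a b) t)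
    (hw : ∀ t ∈ Icc a b, HasDerivWithinAt w (w' t) (Icc a b) t)
    (hupos : ∀ t ∈ Ioc a b, 0 < u t) (hW : ∀ t ∈ Ioc a b, 0 < u t * w' t - u' t * w t) :
    StrictMonoOn (fun t => w t / u t) (Ioc a b) := by
  have hdiv := fun t (ht : t ∈ Ioc a b) =>
    ((hw t (Ioc_subset_Icc_self ht)).div (hu t (Ioc_subset_Icc_self ht)) (hupos t ht).ne').mono
      Ioc_subset_Icc_self
  refine strictMonoOn_of_hasDerivWithinAt_pos (f' := fun t => (w' t * u t - w t * u' t) / u t ^ 2)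
    (convex_Ioc a b)
    (fun t ht => (hdiv t ht).continuousWithinAt) ?_ ?_ <;> rw [interior_Ioc]
  · exact fun t ht => (hdiv t (Ioo_subset_Ioc_self ht)).mono Ioo_subset_Ioc_self
  · intro t ht
    have hWt := hW t (Ioo_subset_Ioc_self ht)
    exact div_pos (by linarith) (pow_pos (hupos t (Ioo_subset_Ioc_self ht)) 2)

end Wronskian

theorem second_order_comparison_general
    (x₀ x₁ : ℝ)
    (p₁ p₂ q : ℝ → ℝ)
    (hp₁ : ContinuousOn p₁ (Icc x₀ x₁))
    (y y' y'' φ φ' φ'' u u' u'' : ℝ → ℝ)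
    (hy1 : ∀ x ∈ Icc x₀ x₁, HasDerivWithinAt y (y' x) (Icc x₀ x₁) x)
    (hy2 : ∀ x ∈ Icc x₀ x₁, HasDerivWithinAt y' (y'' x) (Icc x₀ x₁) x)
    (hφ1 : ∀ x ∈ Icc x₀ x₁, HasDerivWithinAt φ (φ' x) (Icc x₀ x₁) x)
    (hφ2 : ∀ x ∈ Icc x₀ x₁, HasDerivWithinAt φ' (φ'' x) (Icc x₀ x₁) x)
    (hu1 : ∀ x ∈ Icc x₀ x₁, HasDerivWithinAt u (u' x) (Icc x₀ x₁) x)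
    (hu2 : ∀ x ∈ Icc x₀ x₁, HasDerivWithinAt u' (u'' x) (Icc x₀ x₁) x)
    (hyODE : ∀ x ∈ Icc x₀ x₁, y'' x = p₁ x * y' x + p₂ x * y x + q x)
    (hφineq : ∀ x ∈ Icc x₀ x₁, φ'' x > p₁ x * φ' x + p₂ x * φ x + q x)
    (hφ0 : φ x₀ = y x₀) (hφ'0 : φ' x₀ = y' x₀)
    (huODE : ∀ x ∈ Icc x₀ x₁, u'' x = p₁ x * u' x + p₂ x * u x)
    (hu0 : u x₀ = 0) (hu'0 : u' x₀ = 1)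
    (hupos : ∀ x, x₀ < x → x ≤ x₁ → 0 < u x) :
    ∀ x, x₀ < x → x ≤ x₁ → y x < φ x := by
  intro x hx₀ hx₁
  have hw := fun t (ht : t ∈ Icc x₀ x₁) => (hφ1 t ht).sub (hy1 t ht)
  have hw' := fun t (ht : t ∈ Icc x₀ x₁) => (hφ2 t ht).sub (hy2 t ht)
  have hsuper : ∀ t ∈ Ioo x₀ x₁, p₁ t * (φ' t - y' t) + p₂ t * (φ t - y t) < φ'' t - y'' t :=
    fun t ht => by linarith [hφineq t (Ioo_subset_Icc_self ht), hyODE t (Ioo_subset_Icc_self ht)]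
  have hupos_Ioc : ∀ t ∈ Ioc x₀ x₁, 0 < u t := fun t ht => hupos t ht.1 ht.2
  have hW := wronskian_pos_of_strict_supersolution hp₁ hu1 hu2 hw hw' huODE hsuper hu0
    (sub_eq_zero.mpr hφ0) fun t ht => hupos_Ioc t (Ioo_subset_Ioc_self ht)
  have hlim : Tendsto (fun t => (φ t - y t) / u t) (𝓝[>] x₀) (𝓝 0) := by
    have hx₀mem : x₀ ∈ Icc x₀ x₁ := left_mem_Icc.mpr (hx₀.le.trans hx₁)
    have h := tendsto_div_of_hasDerivWithinAt (hw x₀ hx₀mem) (hu1 x₀ hx₀mem)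
      (sub_eq_zero.mpr hφ0) hu0 (by rw [hu'0]; exact one_ne_zero)
    rwa [Icc_sdiff_left, nhdsWithin_Ioc_eq_nhdsGT (hx₀.trans_le hx₁), hφ'0, sub_self,
      zero_div] at h
  have hquot := (strictMonoOn_div_of_wronskian_pos hu1 hw hupos_Ioc hW).pos_of_tendsto_zero hlim
    x ⟨hx₀, hx₁⟩
  exact sub_pos.mp ((div_pos_iff_of_pos_right (hupos x hx₀ hx₁)).mp hquot)

/-- Comparison theorem for second-order linear ODEs: if `y″ = p₁y′ + p₂y + q` on `[x₀,x₁]`,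
`φ″ > p₁φ′ + p₂φ + q` on `[x₀,x₁]`, `φ` and `y` share initial data at `x₀`, and the
homogeneous equation is disconjugate on `(x₀, x₁]` (witnessed by `u` with `u(x₀)=0`,
`u′(x₀)=1`, `u > 0` on `(x₀, x₁]`), then `φ > y` on `(x₀, x₁]`. -/
theorem second_order_comparison
    (x₀ x₁ : ℝ) (hx : x₀ < x₁)
    (p₁ p₂ q : ℝ → ℝ)
    (hp₁ : ContinuousOn p₁ (Icc x₀ x₁)) (hp₂ : ContinuousOn p₂ (Icc x₀ x₁))
    (hq : ContinuousOn q (Icc x₀ x₁))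
    (y y' y'' φ φ' φ'' u u' u'' : ℝ → ℝ)
    (hy1 : ∀ x ∈ Icc x₀ x₁, HasDerivWithinAt y (y' x) (Icc x₀ x₁) x)
    (hy2 : ∀ x ∈ Icc x₀ x₁, HasDerivWithinAt y' (y'' x) (Icc x₀ x₁) x)
    (hy3 : ContinuousOn y'' (Icc x₀ x₁))
    (hφ1 : ∀ x ∈ Icc x₀ x₁, HasDerivWithinAt φ (φ' x) (Icc x₀ x₁) x)
    (hφ2 : ∀ x ∈ Icc x₀ x₁, HasDerivWithinAt φ' (φ'' x) (Icc x₀ x₁) x)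
    (hφ3 : ContinuousOn φ'' (Icc x₀ x₁))
    (hu1 : ∀ x ∈ Icc x₀ x₁, HasDerivWithinAt u (u' x) (Icc x₀ x₁) x)
    (hu2 : ∀ x ∈ Icc x₀ x₁, HasDerivWithinAt u' (u'' x) (Icc x₀ x₁) x)
    (hu3 : ContinuousOn u'' (Icc x₀ x₁))
    (hyODE : ∀ x ∈ Icc x₀ x₁, y'' x = p₁ x * y' x + p₂ x * y x + q x)
    (hφineq : ∀ x ∈ Icc x₀ x₁, φ'' x > p₁ x * φ' x + p₂ x * φ x + q x)
    (hφ0 : φ x₀ = y x₀) (hφ'0 : φ' x₀ = y' x₀)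
    (huODE : ∀ x ∈ Icc x₀ x₁, u'' x = p₁ x * u' x + p₂ x * u x)
    (hu0 : u x₀ = 0) (hu'0 : u' x₀ = 1)
    (hupos : ∀ x, x₀ < x → x ≤ x₁ → 0 < u x) :
    ∀ x, x₀ < x → x ≤ x₁ → y x < φ x :=
  second_order_comparison_general x₀ x₁ p₁ p₂ q hp₁ y y' y'' φ φ' φ'' u u' u'' hy1 hy2 hφ1 hφ2 hu1
    hu2 hyODE hφineq hφ0 hφ'0 huODE hu0 hu'0 hupos
end

section
/- There exists a constant C > 0 such that the following holds: for every continuously differentiable, odd, 2π-periodic function f : ℝ → ℝ with f(0) = f(π) = 0 for which the function ϑ ↦ (f′(ϑ)/sin ϑ)² is integrable on (−π, π), one has, for every θ ∈ ℝ with sin θ ≠ 0, |f(θ)/sin θ| ≤ C·(∫_{−π}^{π} (f′(ϑ)/sin ϑ)² dϑ)^{1/2}. -/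
/-!
On `(0, π)` write `f' = sin · (f' / sin)` and integrate from whichever endpoint `0` or `π` lies
on the side of `θ` where `sin ≤ sin θ`; Cauchy–Schwarz on an interval of length at most `π` gives
`|f θ| ≤ √π · sin θ · ‖f' / sin‖₂`. Since `f / sin` is even and `2π`-periodic, its value at any
`θ` with `sin θ ≠ 0` equals its value at `arccos (cos θ) ∈ (0, π)`.
-/

open Real MeasureTheory Set

theorem abs_integral_mul_le_sqrt_integral_sq_mul_sqrt_integral_sq {α : Type*}
    [MeasurableSpace α] {μ : Measure α} {g h : α → ℝ} (hg : MemLp g 2 μ) (hh : MemLp h 2 μ) :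
    |∫ x, g x * h x ∂μ| ≤ √(∫ x, g x ^ 2 ∂μ) * √(∫ x, h x ^ 2 ∂μ) := by
  have holder := integral_mul_norm_le_Lp_mul_Lq (f := g) (g := h) Real.HolderConjugate.two_two
    (by rwa [ENNReal.ofReal_ofNat]) (by rwa [ENNReal.ofReal_ofNat])
  simp only [Real.norm_eq_abs, Real.rpow_two, sq_abs, ← Real.sqrt_eq_rpow] at holder
  calc |∫ x, g x * h x ∂μ| ≤ ∫ x, |g x| * |h x| ∂μ := by
        simpa only [Real.norm_eq_abs, abs_mul] using
          norm_integral_le_integral_norm (fun x => g x * h x)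
    _ ≤ _ := holder

theorem abs_setIntegral_mul_le_of_abs_le {w g : ℝ → ℝ} {a b s : ℝ} (hab : a ≤ b) (hs : 0 ≤ s)
    (hw : AEStronglyMeasurable w (volume.restrict (Ioo a b))) (hws : ∀ t ∈ Ioo a b, |w t| ≤ s)
    (hg : MemLp g 2 (volume.restrict (Ioo a b))) :
    |∫ t in Ioo a b, w t * g t| ≤ √(b - a) * s * √(∫ t in Ioo a b, g t ^ 2) := by
  have hw2 : MemLp w 2 (volume.restrict (Ioo a b)) :=
    .of_bound hw s (ae_restrict_of_forall_mem measurableSet_Ioo hws)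
  have hw_sq : ∫ t in Ioo a b, w t ^ 2 ≤ (b - a) * s ^ 2 := by
    have := norm_setIntegral_le_of_norm_le_const (f := fun t => w t ^ 2) (C := s ^ 2)
      (measure_Ioo_lt_top (μ := volume)) fun t ht => by
        simpa only [norm_pow, Real.norm_eq_abs] using pow_le_pow_left₀ (abs_nonneg _) (hws t ht) 2
    rw [volume_real_Ioo_of_le hab, Real.norm_eq_abs, mul_comm] at this
    exact (le_abs_self _).trans this
  calc |∫ t in Ioo a b, w t * g t|
      ≤ √(∫ t in Ioo a b, w t ^ 2) * √(∫ t in Ioo a b, g t ^ 2) :=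
        abs_integral_mul_le_sqrt_integral_sq_mul_sqrt_integral_sq hw2 hg
    _ ≤ √((b - a) * s ^ 2) * √(∫ t in Ioo a b, g t ^ 2) := by gcongr
    _ = √(b - a) * s * √(∫ t in Ioo a b, g t ^ 2) := by
        rw [Real.sqrt_mul (sub_nonneg.2 hab), Real.sqrt_sq hs]

theorem abs_sub_le_of_sin_le {f f' : ℝ → ℝ} {a b s : ℝ} {S : Set ℝ}
    (hf : ∀ x ∈ Icc a b, HasDerivAt f (f' x) x) (hf' : Continuous f')
    (ha : 0 ≤ a) (hab : a ≤ b) (hb : b ≤ π) (hs : 0 ≤ s) (hsin : ∀ t ∈ Ioo a b, sin t ≤ s)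
    (hS : Ioo a b ⊆ S) (hint : IntegrableOn (fun t => (f' t / sin t) ^ 2) S) :
    |f b - f a| ≤ √π * s * √(∫ t in S, (f' t / sin t) ^ 2) := by
  have hsin_pos : ∀ t ∈ Ioo a b, 0 < sin t := fun t ht =>
    sin_pos_of_pos_of_lt_pi (ha.trans_lt ht.1) (ht.2.trans_le hb)
  have hftc : f b - f a = ∫ t in Ioo a b, sin t * (f' t / sin t) := by
    rw [← intervalIntegral.integral_eq_sub_of_hasDerivAt
      (fun x hx => hf x (uIcc_of_le hab ▸ hx)) (hf'.intervalIntegrable a b),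
      intervalIntegral.integral_of_le hab, integral_Ioc_eq_integral_Ioo]
    exact setIntegral_congr_fun measurableSet_Ioo fun t ht =>
      (mul_div_cancel₀ _ (hsin_pos t ht).ne').symm
  have hquot : MemLp (fun t => f' t / sin t) 2 (volume.restrict (Ioo a b)) :=
    (memLp_two_iff_integrable_sq (hf'.measurable.div measurable_sin).aestronglyMeasurable).2
      (hint.mono_set hS)
  rw [hftc]
  calc _ ≤ √(b - a) * s * √(∫ t in Ioo a b, (f' t / sin t) ^ 2) :=
        abs_setIntegral_mul_le_of_abs_le hab hs continuous_sin.aestronglyMeasurable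
          (fun t ht => (abs_of_pos (hsin_pos t ht)).trans_le (hsin t ht)) hquot
    _ ≤ √π * s * √(∫ t in S, (f' t / sin t) ^ 2) := by
        gcongr √?_ * _ * √?_
        · linarith
        · exact setIntegral_mono_set hint (.of_forall fun t => sq_nonneg _) hS.eventuallyLE

theorem abs_le_sqrt_pi_mul_sin_mul {f f' : ℝ → ℝ} {S : Set ℝ} {θ : ℝ}
    (hf : ∀ x, HasDerivAt f (f' x) x) (hf' : Continuous f') (hf0 : f 0 = 0) (hfπ : f π = 0)
    (hS : Ioo 0 π ⊆ S) (hint : IntegrableOn (fun t => (f' t / sin t) ^ 2) S)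
    (hθ : θ ∈ Ioo 0 π) :
    |f θ| ≤ √π * sin θ * √(∫ t in S, (f' t / sin t) ^ 2) := by
  have hsθ : 0 ≤ sin θ := (sin_pos_of_pos_of_lt_pi hθ.1 hθ.2).le
  rcases le_total θ (π / 2) with hθπ | hθπ
  · have := abs_sub_le_of_sin_le (fun x _ => hf x) hf' le_rfl hθ.1.le hθ.2.le hsθ
      (fun t ht => sin_le_sin_of_le_of_le_pi_div_two (by linarith [ht.1, pi_pos]) hθπ ht.2.le)
      ((Ioo_subset_Ioo_right hθ.2.le).trans hS) hint
    rwa [hf0, sub_zero] at this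
  · have := abs_sub_le_of_sin_le (fun x _ => hf x) hf' hθ.1.le hθ.2.le le_rfl hsθ
      (fun t ht => by
        rw [← sin_pi_sub t, ← sin_pi_sub θ]
        exact sin_le_sin_of_le_of_le_pi_div_two (by linarith [ht.2, pi_pos]) (by linarith)
          (by linarith [ht.1]))
      ((Ioo_subset_Ioo_left hθ.1.le).trans hS) hint
    rwa [hfπ, zero_sub, abs_neg] at this

theorem Function.Periodic.eq_of_cos_eq {α : Type*} {q : ℝ → α} (hper : q.Periodic (2 * π))
    (heven : q.Even) {x y : ℝ} (h : cos x = cos y) : q x = q y := by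
  obtain ⟨k, rfl | rfl⟩ := cos_eq_cos_iff.1 h
  · rw [show 2 * k * π + x = x + k * (2 * π) by ring, hper.int_mul k x]
  · rw [show 2 * k * π - x = -x + k * (2 * π) by ring, hper.int_mul k (-x), heven x]

/-- Hardy-type inequality: there is a constant `C > 0` such that every continuously
differentiable, odd, `2π`-periodic function `f` with `f(0) = f(π) = 0` whose weighted
derivative `f′/sin` is square-integrable on `(−π, π)` satisfies
`|f(θ)/sin θ| ≤ C·‖f′/sin‖_{L²(−π,π)}` for all `θ` with `sin θ ≠ 0`. -/
theorem hardy_type_inequality :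
    ∃ C : ℝ, 0 < C ∧
      ∀ f f' : ℝ → ℝ,
        (∀ x, HasDerivAt f (f' x) x) →
        Continuous f' →
        (∀ x, f (-x) = -f x) →
        Function.Periodic f (2 * π) →
        f 0 = 0 → f π = 0 →
        IntegrableOn (fun ϑ => (f' ϑ / sin ϑ) ^ 2) (Set.Ioo (-π) π) →
        ∀ θ : ℝ, sin θ ≠ 0 →
          |f θ / sin θ| ≤ C * Real.sqrt (∫ ϑ in Set.Ioo (-π) π, (f' ϑ / sin ϑ) ^ 2) := by
  refine ⟨√π, by positivity, fun f f' hf hf' hodd hper hf0 hfπ hint θ hθ => ?_⟩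
  have hcos : -1 < cos θ ∧ cos θ < 1 := by
    have : cos θ ^ 2 < 1 := by nlinarith [sin_sq_add_cos_sq θ, sq_pos_of_ne_zero hθ]
    exact abs_lt.1 ((sq_lt_one_iff_abs_lt_one _).1 this)
  set θ' := arccos (cos θ)
  have hθ' : θ' ∈ Ioo 0 π := ⟨arccos_pos.2 hcos.2, arccos_lt_pi.2 hcos.1⟩
  have hsθ' : 0 < sin θ' := sin_pos_of_pos_of_lt_pi hθ'.1 hθ'.2
  have hquot : f θ / sin θ = f θ' / sin θ' :=
    (hper.div sin_periodic).eq_of_cos_eq (fun x => by simp [hodd, neg_div_neg_eq])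
      (cos_arccos hcos.1.le hcos.2.le).symm
  rw [hquot, abs_div, abs_of_pos hsθ', div_le_iff₀ hsθ', mul_right_comm]
  exact abs_le_sqrt_pi_mul_sin_mul hf hf' hf0 hfπ
    (Ioo_subset_Ioo_left (neg_nonpos.2 pi_pos.le)) hint hθ'
end

section
/- Let C₁, C₂ > 0, let I₀ > 0, and set T₀ := (1/C₁)·log(1 + C₁/(2·C₂·I₀)). Let I : [0, T₀] → ℝ be differentiable with I(t) ≥ 0 and I′(t) ≤ C₁·I(t) + C₂·I(t)² for all t ∈ [0, T₀], and I(0) = I₀. Then for every t ∈ [0, T₀] one has I(t) ≤ 2·I₀·e^{C₁·t}. -/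
open Real Set

/-!
The substitution `w = 1 / y` turns the Riccati equation `y' = a y + b y²` into the linear equation
`w' = -a w - b`. Accordingly, for a nonnegative subsolution `f` of the Riccati equation the quantity
`e^{-a t} f / (a + b f)` is nonincreasing, which bounds `f(t)` by the exact Riccati solution
`a f(s) e^{a(t-s)} / (a + b f(s) (1 - e^{a(t-s)}))`. The choice of `T₀` is exactly what keeps the
denominator `C₁ + C₂ I₀ (1 - e^{C₁ t})` above `C₁ / 2`, whence the factor `2`.
-/

noncomputable def riccatiQuotient (a b : ℝ) (f : ℝ → ℝ) (t : ℝ) : ℝ :=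
  exp (-(a * t)) * (f t / (a + b * f t))

section Riccati

variable {a b : ℝ} {f f' : ℝ → ℝ} {D : Set ℝ}

theorem hasDerivWithinAt_riccatiQuotient {v : ℝ} {s : Set ℝ} {t : ℝ}
    (hf : HasDerivWithinAt f v s t) (hden : a + b * f t ≠ 0) :
    HasDerivWithinAt (riccatiQuotient a b f)
      (exp (-(a * t)) * a * (v - (a * f t + b * f t ^ 2)) / (a + b * f t) ^ 2) s t := by
  have hexp : HasDerivWithinAt (fun u => exp (-(a * u))) (exp (-(a * t)) * -a) s t := by
    simpa using ((hasDerivAt_id t).const_mul a).neg.exp.hasDerivWithinAt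
  refine (hexp.mul (hf.div ((hf.const_mul b).const_add a) hden)).congr_deriv ?_
  rw [Pi.div_apply]
  field_simp
  ring

theorem antitoneOn_riccatiQuotient (hD : Convex ℝ D) (ha : 0 < a) (hb : 0 ≤ b)
    (hf : ∀ t ∈ D, HasDerivWithinAt f (f' t) D t) (hf₀ : ∀ t ∈ D, 0 ≤ f t)
    (hf' : ∀ t ∈ D, f' t ≤ a * f t + b * f t ^ 2) :
    AntitoneOn (riccatiQuotient a b f) D := by
  have hden : ∀ t ∈ D, 0 < a + b * f t := fun t ht => by positivity [hf₀ t ht]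
  refine antitoneOn_of_hasDerivWithinAt_nonpos hD
    (f' := fun t => exp (-(a * t)) * a * (f' t - (a * f t + b * f t ^ 2)) / (a + b * f t) ^ 2)
    (fun t ht => ?_) (fun t ht => ?_) (fun t ht => ?_)
  · exact (hasDerivWithinAt_riccatiQuotient (hf t ht) (hden t ht).ne').continuousWithinAt
  · have ht' := interior_subset ht
    exact (hasDerivWithinAt_riccatiQuotient (hf t ht') (hden t ht').ne').mono interior_subset
  · have ht' := interior_subset ht
    have : f' t - (a * f t + b * f t ^ 2) ≤ 0 := sub_nonpos.2 (hf' t ht')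
    exact div_nonpos_of_nonpos_of_nonneg
      (mul_nonpos_of_nonneg_of_nonpos (by positivity) this) (sq_nonneg _)

theorem riccati_upper_bound (hD : Convex ℝ D) (ha : 0 < a) (hb : 0 ≤ b)
    (hf : ∀ t ∈ D, HasDerivWithinAt f (f' t) D t) (hf₀ : ∀ t ∈ D, 0 ≤ f t)
    (hf' : ∀ t ∈ D, f' t ≤ a * f t + b * f t ^ 2) {s t : ℝ} (hs : s ∈ D) (ht : t ∈ D)
    (hst : s ≤ t) :
    f t * (a + b * f s * (1 - exp (a * (t - s)))) ≤ a * f s * exp (a * (t - s)) := by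
  have hmono := antitoneOn_riccatiQuotient hD ha hb hf hf₀ hf' hs ht hst
  have hdens : 0 < a + b * f s := by positivity [hf₀ s hs]
  have hdent : 0 < a + b * f t := by positivity [hf₀ t ht]
  simp only [riccatiQuotient] at hmono
  rw [mul_div_assoc', mul_div_assoc', div_le_div_iff₀ hdent hdens] at hmono
  have hscaled : f t * (a + b * f s) ≤ exp (a * (t - s)) * f s * (a + b * f t) :=
    calc f t * (a + b * f s) = exp (a * t) * (exp (-(a * t)) * f t * (a + b * f s)) := by
          rw [← mul_assoc, ← mul_assoc, ← exp_add, add_neg_cancel, exp_zero, one_mul]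
      _ ≤ exp (a * t) * (exp (-(a * s)) * f s * (a + b * f t)) := by gcongr
      _ = exp (a * (t - s)) * f s * (a + b * f t) := by
          rw [← mul_assoc, ← mul_assoc, ← exp_add, ← sub_eq_add_neg, ← mul_sub]
  linear_combination hscaled

end Riccati

/-- Riccati-type differential inequality bound: if `I′ ≤ C₁I + C₂I²` on `[0, T₀]` with
`I ≥ 0`, `I(0) = I₀ > 0` and `T₀ = (1/C₁)·log(1 + C₁/(2C₂I₀))`, then
`I(t) ≤ 2I₀·e^{C₁t}` on `[0, T₀]`. -/
theorem riccati_inequality_bound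
    (C₁ C₂ I₀ : ℝ) (hC₁ : 0 < C₁) (hC₂ : 0 < C₂) (hI₀ : 0 < I₀)
    (T₀ : ℝ) (hT₀ : T₀ = (1 / C₁) * Real.log (1 + C₁ / (2 * C₂ * I₀)))
    (I I' : ℝ → ℝ)
    (hderiv : ∀ t ∈ Icc (0 : ℝ) T₀, HasDerivWithinAt I (I' t) (Icc (0 : ℝ) T₀) t)
    (hnonneg : ∀ t ∈ Icc (0 : ℝ) T₀, 0 ≤ I t)
    (hineq : ∀ t ∈ Icc (0 : ℝ) T₀, I' t ≤ C₁ * I t + C₂ * (I t) ^ 2)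
    (hinit : I 0 = I₀) :
    ∀ t ∈ Icc (0 : ℝ) T₀, I t ≤ 2 * I₀ * Real.exp (C₁ * t) := by
  intro t ht
  have hexpT₀ : exp (C₁ * T₀) = 1 + C₁ / (2 * C₂ * I₀) := by
    rw [hT₀, ← mul_assoc, mul_one_div_cancel hC₁.ne', one_mul, exp_log (by positivity)]
  have hexp : exp (C₁ * t) ≤ 1 + C₁ / (2 * C₂ * I₀) :=
    hexpT₀ ▸ exp_le_exp.2 (mul_le_mul_of_nonneg_left ht.2 hC₁.le)
  have hden : C₁ / 2 ≤ C₁ + C₂ * I₀ * (1 - exp (C₁ * t)) := by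
    have : C₂ * I₀ * (exp (C₁ * t) - 1) ≤ C₁ / 2 := by
      rw [← le_div_iff₀' (by positivity)]
      calc exp (C₁ * t) - 1 ≤ C₁ / (2 * C₂ * I₀) := by linarith
        _ = C₁ / 2 / (C₂ * I₀) := by ring
    linarith
  have hbound := riccati_upper_bound (convex_Icc 0 T₀) hC₁ hC₂.le hderiv hnonneg hineq
    ⟨le_rfl, ht.1.trans ht.2⟩ ht ht.1
  rw [sub_zero, hinit] at hbound
  have hscaled : C₁ * I t ≤ C₁ * (2 * I₀ * exp (C₁ * t)) := by
    linarith [(mul_le_mul_of_nonneg_left hden (hnonneg t ht)).trans hbound]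
  exact le_of_mul_le_mul_left hscaled hC₁
end

section
/- Let C > 0 and let y : [0, ∞) → ℝ be differentiable with y(t) ≥ 0 and y′(t) ≤ −y(t) + C·y(t)^{3/2} for all t ≥ 0, and suppose y(0) ≤ 1/(4·C²). Then y(t) ≤ y(0)·e^{−t/2} for all t ≥ 0. -/
open Real Set

/-!
Below the threshold `1 / (4 C²)` the nonlinearity is dominated by half the damping,
`C y^{3/2} ≤ y / 2`, so there `y' ≤ -y / 2`. A barrier argument shows that `y` never reaches
the threshold: at a first touching time `y'` would be strictly negative. Hence `y' ≤ -y / 2`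
for all times, and Grönwall's inequality gives the decay `y(0) e^{-t/2}`.
-/

lemma mul_rpow_three_halves_le_half {C z : ℝ} (hC : 0 < C) (hz : 0 ≤ z)
    (hzC : z ≤ 1 / (4 * C ^ 2)) : C * z ^ ((3 : ℝ) / 2) ≤ z / 2 := by
  have hpow : z ^ ((3 : ℝ) / 2) = z * √z := by
    rw [show (3 : ℝ) / 2 = 1 + 1 / 2 by norm_num, rpow_one_add' hz (by norm_num), sqrt_eq_rpow]
  have hsq : C ^ 2 * z ≤ 1 / 4 := by
    rw [le_div_iff₀ (by positivity)] at hzC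
    linarith
  have hCsqrt : C * √z ≤ 1 / 2 := by
    nlinarith [sqrt_nonneg z, sq_sqrt hz]
  rw [hpow]
  nlinarith

section DerivOnIci

variable {f f' : ℝ → ℝ} {a : ℝ}

lemma continuousOn_Icc_of_hasDerivWithinAt_Ici
    (hf : ∀ t ∈ Ici a, HasDerivWithinAt f (f' t) (Ici a) t) (b : ℝ) :
    ContinuousOn f (Icc a b) :=
  fun t ht => (hf t ht.1).continuousWithinAt.mono Icc_subset_Ici_self

lemma hasDerivWithinAt_Ici_self_of_hasDerivWithinAt_Ici
    (hf : ∀ t ∈ Ici a, HasDerivWithinAt f (f' t) (Ici a) t) {t : ℝ} (ht : a ≤ t) :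
    HasDerivWithinAt f (f' t) (Ici t) t :=
  (hf t ht).mono (Ici_subset_Ici.2 ht)

lemma le_const_of_deriv_neg_of_eq {M : ℝ}
    (hf : ∀ t ∈ Ici a, HasDerivWithinAt f (f' t) (Ici a) t) (ha : f a ≤ M)
    (hM : ∀ t ∈ Ici a, f t = M → f' t < 0) :
    ∀ t ∈ Ici a, f t ≤ M := fun t ht =>
  image_le_of_deriv_right_lt_deriv_boundary (B := fun _ => M)
    (continuousOn_Icc_of_hasDerivWithinAt_Ici hf t)
    (fun _ hs => hasDerivWithinAt_Ici_self_of_hasDerivWithinAt_Ici hf hs.1) ha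
    (fun _ => hasDerivAt_const _ M) (fun s hs => hM s hs.1) (right_mem_Icc.2 ht)

lemma le_mul_exp_of_deriv_le_mul {K : ℝ}
    (hf : ∀ t ∈ Ici a, HasDerivWithinAt f (f' t) (Ici a) t)
    (bound : ∀ t ∈ Ici a, f' t ≤ K * f t) :
    ∀ t ∈ Ici a, f t ≤ f a * exp (K * (t - a)) := fun t ht => by
  have := le_gronwallBound_of_liminf_deriv_right_le (ε := 0) (b := t)
    (continuousOn_Icc_of_hasDerivWithinAt_Ici hf t)
    (fun s hs _ hr =>
      (hasDerivWithinAt_Ici_self_of_hasDerivWithinAt_Ici hf hs.1).liminf_right_slope_le hr)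
    le_rfl (fun s hs => by simpa using bound s hs.1) t (right_mem_Icc.2 ht)
  rwa [gronwallBound_ε0] at this

end DerivOnIci

/-- Grönwall-type bootstrap lemma: if `y ≥ 0` satisfies `y′ ≤ −y + C·y^{3/2}` on `[0, ∞)`
and `y(0) ≤ 1/(4C²)`, then `y(t) ≤ y(0)·e^{−t/2}` for all `t ≥ 0`. -/
theorem bootstrap_decay
    (C : ℝ) (hC : 0 < C)
    (y y' : ℝ → ℝ)
    (hderiv : ∀ t, 0 ≤ t → HasDerivWithinAt y (y' t) (Ici (0 : ℝ)) t)
    (hnonneg : ∀ t, 0 ≤ t → 0 ≤ y t)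
    (hineq : ∀ t, 0 ≤ t → y' t ≤ -y t + C * (y t) ^ ((3 : ℝ) / 2))
    (hinit : y 0 ≤ 1 / (4 * C ^ 2)) :
    ∀ t, 0 ≤ t → y t ≤ y 0 * Real.exp (-t / 2) := by
  have hthreshold : 0 < 1 / (4 * C ^ 2) := by positivity
  have hsmall : ∀ t ∈ Ici 0, y t ≤ 1 / (4 * C ^ 2) :=
    le_const_of_deriv_neg_of_eq hderiv hinit fun t ht hyt => by
      have := mul_rpow_three_halves_le_half hC (hnonneg t ht) hyt.le
      linarith [hineq t ht]
  have hdamped : ∀ t ∈ Ici 0, y' t ≤ -(1 / 2) * y t := fun t ht => by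
    have := mul_rpow_three_halves_le_half hC (hnonneg t ht) (hsmall t ht)
    linarith [hineq t ht]
  intro t ht
  convert le_mul_exp_of_deriv_le_mul hderiv hdamped t ht using 3
  ring
end
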